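/- Let p, q₀ ∈ S_n with q₀ ≠ p, and define the dual loss L*_p(η) = D(p(η)‖p) for η ∈ Δ_n, where p(η) ∈ S_n is the distribution with η coordinates η. Let η : [0, ∞) → Δ_n be differentiable with η(0) = η_{q₀} and η'(t) = −∇L*_p(η(t)) for all t ≥ 0. Then there exist constants 1 < m ≤ L and c > 0 such that c·e^{−2Lt} ≤ L*_p(η(t)) ≤ c·e^{−2mt} ≤ c·e^{−2t} for all t ≥ 0; i.e., L*_p(η(t)) converges to zero exponentially with rate higher than 2. -/

import Mathlib

open Filter

noncomputable section

abbrev E (n : ℕ) := EuclideanSpace ℝ (Fin n)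

/-- The open probability simplex `S_n` inside `ℝ^{n+1}`. -/
def simplex (n : ℕ) : Set (Fin (n+1) → ℝ) :=
  {p | (∀ i, 0 < p i) ∧ ∑ i, p i = 1}

/-- The mixture (`η`) coordinate domain `Δ_n`. -/
def Δset (n : ℕ) : Set (E n) := {η | (∀ i, 0 < η i) ∧ ∑ i, η i < 1}

/-- The distribution in `S_n` corresponding to `η` coordinates. -/
def mixDist {n : ℕ} (η : E n) : Fin (n+1) → ℝ :=
  Fin.snoc (fun i => η i) (1 - ∑ i, η i)

/-- The distribution in `S_n` corresponding to `θ` coordinates. -/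
def expDist {n : ℕ} (θ : E n) : Fin (n+1) → ℝ :=
  Fin.snoc (fun i => Real.exp (θ i) / (1 + ∑ j, Real.exp (θ j)))
    (1 / (1 + ∑ j, Real.exp (θ j)))

/-- The `η` coordinates of a distribution `q ∈ S_n`. -/
def etaCoord {n : ℕ} (q : Fin (n+1) → ℝ) : E n := WithLp.toLp 2 (fun i : Fin n => q i.castSucc)

/-- The `θ` coordinates of a distribution `q ∈ S_n`. -/
def thetaCoord {n : ℕ} (q : Fin (n+1) → ℝ) : E n :=
  WithLp.toLp 2 (fun i : Fin n => Real.log (q i.castSucc / q (Fin.last n)))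

/-- Kullback–Leibler divergence `D(q‖p)`. -/
def KL {n : ℕ} (q p : Fin (n+1) → ℝ) : ℝ := ∑ i, q i * Real.log (q i / p i)

/-- Log-partition function `ψ(θ) = log(1 + Σ e^{θ_i})`. -/
def psi {n : ℕ} (θ : E n) : ℝ := Real.log (1 + ∑ i, Real.exp (θ i))

/-- Negative entropy `φ(η)`. -/
def phi {n : ℕ} (η : E n) : ℝ :=
  (∑ i, η i * Real.log (η i)) + (1 - ∑ i, η i) * Real.log (1 - ∑ i, η i)

/-- The loss `L_q` in `η` coordinates: `η ↦ D(q ‖ p(η))`. -/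
def Leta {n : ℕ} (q : Fin (n+1) → ℝ) (η : E n) : ℝ := KL q (mixDist η)

/-- The loss `L_q` in `θ` coordinates: `θ ↦ D(q ‖ p(θ))`. -/
def Ltheta {n : ℕ} (q : Fin (n+1) → ℝ) (θ : E n) : ℝ := KL q (expDist θ)

/-- The Hessian of `f : ℝⁿ → ℝ` at `x`, as the `n × n` matrix of second partial
derivatives. -/
def hess {n : ℕ} (f : E n → ℝ) (x : E n) : Matrix (Fin n) (Fin n) ℝ :=
  Matrix.of fun i j =>
    fderiv ℝ (fun y => fderiv ℝ f y (EuclideanSpace.single j 1)) x (EuclideanSpace.single i 1)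

/-- The set of (real) eigenvalues of a matrix. -/
def lamSet {n : ℕ} (A : Matrix (Fin n) (Fin n) ℝ) : Set ℝ :=
  {μ | ∃ v : Fin n → ℝ, v ≠ 0 ∧ A.mulVec v = μ • v}

/-- Largest eigenvalue `λ_max`. -/
def lamMax {n : ℕ} (A : Matrix (Fin n) (Fin n) ℝ) : ℝ := sSup (lamSet A)

/-- Smallest eigenvalue `λ_min`. -/
def lamMin {n : ℕ} (A : Matrix (Fin n) (Fin n) ℝ) : ℝ := sInf (lamSet A)

/-- Condition number `cond(A) = λ_max(A)/λ_min(A)`. -/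
def condNum {n : ℕ} (A : Matrix (Fin n) (Fin n) ℝ) : ℝ := lamMax A / lamMin A

/-- Operator 2-norm of a matrix (induced by the Euclidean norm). -/
def opNorm {n : ℕ} (A : Matrix (Fin n) (Fin n) ℝ) : ℝ :=
  ‖Matrix.toEuclideanCLM (𝕜 := ℝ) A‖


/-- The dual loss `L*_p(η) = D(p(η)‖p)` in `η` coordinates. -/
def Lstar {n : ℕ} (p : Fin (n+1) → ℝ) (η : E n) : ℝ := KL (mixDist η) p

/-!
Write `ℓ(t) = L*_p(η(t))` and `q = p(η)`; along the flow `ℓ' = -‖∇L*_p‖²`. The gradient pairs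
with `η - η_p` to the symmetrised divergence `D(q‖p) + D(p‖q)`, and Pinsker's inequality bounds
`D(p‖q)` below by `‖η - η_p‖²`; Cauchy–Schwarz then yields the Polyak–Łojasiewicz inequality
`‖∇L*_p‖² ≥ 4 ℓ`, so `ℓ(t) ≤ ℓ(0) e^{-4t}`. Pinsker in the other direction turns `ℓ → 0` into
`η(t) → η_p`, so the whole trajectory stays in a compact part of `Δ_n`, where `log` is
Lipschitz and `‖∇L*_p‖² ≤ K ℓ`; this gives `ℓ(t) ≥ ℓ(0) e^{-Kt}`.
-/

open Real Set Finset Topology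

theorem mul_sub_le_sub_of_hasDerivAt {f f' : ℝ → ℝ} {C a b : ℝ} (hab : a ≤ b)
    (hf : ∀ s ∈ Icc a b, HasDerivAt f (f' s) s) (hC : ∀ s ∈ Icc a b, C ≤ f' s) :
    C * (b - a) ≤ f b - f a :=
  (convex_Icc a b).mul_sub_le_image_sub_of_le_deriv
    (fun s hs => (hf s hs).continuousAt.continuousWithinAt)
    (fun s hs => (hf s (interior_subset hs)).differentiableAt.differentiableWithinAt)
    (fun s hs => (hf s (interior_subset hs)).deriv ▸ hC s (interior_subset hs))
    a (left_mem_Icc.2 hab) b (right_mem_Icc.2 hab) hab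

theorem add_add_half_le_of_le_deriv2 {h h' h'' : ℝ → ℝ} {c : ℝ}
    (hh : ∀ s ∈ Icc (0 : ℝ) 1, HasDerivAt h (h' s) s)
    (hh' : ∀ s ∈ Icc (0 : ℝ) 1, HasDerivAt h' (h'' s) s)
    (hc : ∀ s ∈ Icc (0 : ℝ) 1, c ≤ h'' s) :
    h 0 + h' 0 + c / 2 ≤ h 1 := by
  have hslope : ∀ s ∈ Icc (0 : ℝ) 1, h' 0 + c * s ≤ h' s := fun s hs => by
    have := mul_sub_le_sub_of_hasDerivAt hs.1 (fun u hu => hh' u ⟨hu.1, hu.2.trans hs.2⟩)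
      (fun u hu => hc u ⟨hu.1, hu.2.trans hs.2⟩)
    linarith
  have hk : ∀ s ∈ Icc (0 : ℝ) 1,
      HasDerivAt (fun s => h s - c / 2 * s ^ 2) (h' s - c * s) s := fun s hs => by
    refine ((hh s hs).fun_sub ((hasDerivAt_pow 2 s).const_mul (c / 2))).congr_deriv ?_
    push_cast; ring
  have := mul_sub_le_sub_of_hasDerivAt zero_le_one hk (C := h' 0) fun s hs => by
    linarith [hslope s hs]
  linarith

theorem le_mul_exp_neg_of_hasDerivAt {f f' : ℝ → ℝ} {a : ℝ}
    (hf : ∀ t ≥ (0 : ℝ), HasDerivAt f (f' t) t)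
    (hb : ∀ t ≥ (0 : ℝ), f' t ≤ -(a * f t)) :
    ∀ t ≥ (0 : ℝ), f t ≤ f 0 * exp (-(a * t)) := by
  have hF : ∀ t ≥ (0 : ℝ), HasDerivAt (fun t => f t * exp (a * t))
      ((f' t + a * f t) * exp (a * t)) t := fun t ht => by
    refine ((hf t ht).fun_mul ((hasDerivAt_id t).const_mul a).exp).congr_deriv ?_
    simp only [id_eq]; ring
  have hanti : AntitoneOn (fun t => f t * exp (a * t)) (Ici 0) := by
    refine antitoneOn_of_hasDerivWithinAt_nonpos (convex_Ici 0)
      (fun t ht => (hF t ht).continuousAt.continuousWithinAt)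
      (fun t ht => (hF t (interior_subset ht)).hasDerivWithinAt) fun t ht => ?_
    have := hb t (interior_subset ht)
    exact mul_nonpos_of_nonpos_of_nonneg (by linarith) (exp_pos _).le
  intro t ht
  have := hanti self_mem_Ici ht ht
  simp only [mul_zero, exp_zero, mul_one] at this
  calc f t = f t * exp (a * t) * exp (-(a * t)) := by rw [mul_assoc, ← exp_add]; simp
    _ ≤ f 0 * exp (-(a * t)) := by gcongr

theorem mul_exp_neg_le_of_hasDerivAt {f f' : ℝ → ℝ} {a : ℝ}
    (hf : ∀ t ≥ (0 : ℝ), HasDerivAt f (f' t) t)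
    (hb : ∀ t ≥ (0 : ℝ), -(a * f t) ≤ f' t) :
    ∀ t ≥ (0 : ℝ), f 0 * exp (-(a * t)) ≤ f t := fun t ht => by
  have := le_mul_exp_neg_of_hasDerivAt (f := -f) (f' := -f') (a := a) (fun t ht => (hf t ht).neg)
    (fun t ht => by simp only [Pi.neg_apply]; linarith [hb t ht]) t ht
  simp only [Pi.neg_apply, neg_mul] at this
  linarith

theorem tendsto_nhds_zero_of_le_mul_exp_neg {f : ℝ → ℝ} {C a : ℝ} (ha : 0 < a)
    (hnonneg : ∀ t ≥ (0 : ℝ), 0 ≤ f t)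
    (hle : ∀ t ≥ (0 : ℝ), f t ≤ C * exp (-(a * t))) :
    Tendsto f atTop (𝓝 0) :=
  squeeze_zero' (eventually_atTop.2 ⟨0, hnonneg⟩) (eventually_atTop.2 ⟨0, hle⟩) <| by
    simpa using (tendsto_exp_neg_atTop_nhds_zero.comp (tendsto_id.const_mul_atTop ha)).const_mul C

theorem exists_pos_forall_le_of_tendsto {f : ℝ → ℝ} {a : ℝ} (hf : ContinuousOn f (Ici 0))
    (hpos : ∀ t ≥ (0 : ℝ), 0 < f t) (hlim : Tendsto f atTop (𝓝 a)) (ha : 0 < a) :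
    ∃ ε > 0, ∀ t ≥ (0 : ℝ), ε ≤ f t := by
  obtain ⟨T, hT⟩ := eventually_atTop.1 (hlim.eventually (lt_mem_nhds (half_lt_self ha)))
  obtain ⟨t₀, ht₀, hmin⟩ := isCompact_Icc.exists_isMinOn
    (nonempty_Icc.2 (le_max_left 0 T)) (hf.mono Icc_subset_Ici_self)
  refine ⟨min (a / 2) (f t₀), lt_min (half_pos ha) (hpos t₀ ht₀.1), fun t ht => ?_⟩
  rcases le_total t (max 0 T) with h | h
  · exact (min_le_right _ _).trans (hmin ⟨ht, h⟩)
  · exact (min_le_left _ _).trans (hT t (le_of_max_le_right h)).le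

theorem two_mul_sum_sq_le_sq_sum_abs {ι : Type*} [Fintype ι] {D : ι → ℝ}
    (hD : ∑ i, D i = 0) : 2 * ∑ i, D i ^ 2 ≤ (∑ i, |D i|) ^ 2 := by
  classical
  -- each `|D k|` is at most the sum of the others, since they add up to `-D k`
  have hmax : ∀ k, 2 * |D k| ≤ ∑ i, |D i| := fun k => by
    have hsum := add_sum_erase univ D (mem_univ k)
    have habs := add_sum_erase univ (fun i => |D i|) (mem_univ k)
    have : |D k| ≤ ∑ i ∈ univ.erase k, |D i| := by
      rw [← abs_neg, show -D k = ∑ i ∈ univ.erase k, D i by linarith]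
      exact abs_sum_le_sum_abs _ _
    linarith
  calc 2 * ∑ i, D i ^ 2 = ∑ i, |D i| * (2 * |D i|) := by
        rw [mul_sum]; exact sum_congr rfl fun i _ => by rw [← sq_abs]; ring
    _ ≤ ∑ i, |D i| * ∑ j, |D j| :=
        sum_le_sum fun i _ => mul_le_mul_of_nonneg_left (hmax i) (abs_nonneg _)
    _ = (∑ i, |D i|) ^ 2 := by rw [← sum_mul, sq]

theorem abs_log_div_le {a b ε : ℝ} (hε : 0 < ε) (ha : ε ≤ a) (hb : ε ≤ b) :
    |log (a / b)| ≤ |a - b| / ε := by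
  have key : ∀ a b, ε ≤ a → ε ≤ b → log (a / b) ≤ |a - b| / ε := fun a b ha hb =>
    calc log (a / b) ≤ a / b - 1 :=
          log_le_sub_one_of_pos (div_pos (hε.trans_le ha) (hε.trans_le hb))
      _ = (a - b) / b := by field_simp [(hε.trans_le hb).ne']
      _ ≤ |a - b| / b := div_le_div_of_nonneg_right (le_abs_self _) (hε.trans_le hb).le
      _ ≤ |a - b| / ε := by gcongr
  rw [abs_le]
  refine ⟨?_, key a b ha hb⟩
  have := key b a hb ha
  rw [← inv_div, log_inv, abs_sub_comm] at this
  linarith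

theorem hasDerivAt_mul_log_div {a c : ℝ} (ha : a ≠ 0) (hc : c ≠ 0) :
    HasDerivAt (fun x => x * log (x / c)) (log (a / c) + 1) a := by
  refine ((hasDerivAt_id a).fun_mul (((hasDerivAt_id a).div_const c).log
    (div_ne_zero ha hc))).congr_deriv ?_
  simp only [id]
  field_simp

section KullbackLeibler

variable {n : ℕ} {q p : Fin (n+1) → ℝ}

theorem KL_add_KL (q p : Fin (n+1) → ℝ) :
    KL q p + KL p q = ∑ j, (q j - p j) * log (q j / p j) := by
  rw [KL, KL, ← sum_add_distrib]
  refine sum_congr rfl fun j _ => ?_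
  rw [show p j / q j = (q j / p j)⁻¹ from (inv_div _ _).symm, log_inv]
  ring

/-- Pinsker's inequality. -/
theorem sq_sum_abs_sub_le_two_mul_KL (hq : q ∈ simplex n) (hp : p ∈ simplex n) :
    (∑ j, |q j - p j|) ^ 2 ≤ 2 * KL q p := by
  -- second-order Taylor bound along `s ↦ p + s (q - p)`, whose second derivative is a
  -- chi-square sum bounded below by Cauchy–Schwarz
  set D : Fin (n+1) → ℝ := fun j => q j - p j
  set r : ℝ → Fin (n+1) → ℝ := fun s j => p j + s * D j
  have hr_pos : ∀ s ∈ Icc (0 : ℝ) 1, ∀ j, 0 < r s j := fun s hs j => by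
    have := hp.1 j; have := hq.1 j
    rcases le_total (p j) (q j) with h | h <;> simp only [r, D] <;> nlinarith [hs.1, hs.2]
  have hr_sum : ∀ s, ∑ j, r s j = 1 := fun s => by
    simp only [r, D, sum_add_distrib, ← mul_sum, sum_sub_distrib, hp.2, hq.2]; ring
  have hr : ∀ s j, HasDerivAt (fun s => r s j) (D j) s := fun s j =>
    (((hasDerivAt_id s).mul_const (D j)).const_add (p j)).congr_deriv (one_mul _)
  have hh : ∀ s ∈ Icc (0 : ℝ) 1, HasDerivAt (fun s => ∑ j, r s j * log (r s j / p j))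
      (∑ j, D j * (log (r s j / p j) + 1)) s := fun s hs =>
    HasDerivAt.fun_sum fun j _ => by
      have := (hasDerivAt_mul_log_div (hr_pos s hs j).ne' (hp.1 j).ne').comp s (hr s j)
      exact this.congr_deriv (by ring)
  have hh' : ∀ s ∈ Icc (0 : ℝ) 1, HasDerivAt (fun s => ∑ j, D j * (log (r s j / p j) + 1))
      (∑ j, D j ^ 2 / r s j) s := fun s hs =>
    HasDerivAt.fun_sum fun j _ => ((((hr s j).div_const (p j)).log
      (div_pos (hr_pos s hs j) (hp.1 j)).ne').add_const 1 |>.const_mul (D j)).congr_deriv (by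
        field_simp [(hp.1 j).ne', (hr_pos s hs j).ne'])
  have hc (s : ℝ) (hs : s ∈ Icc (0 : ℝ) 1) : (∑ j, |D j|) ^ 2 ≤ ∑ j, D j ^ 2 / r s j := by
    have := sq_sum_div_le_sum_sq_div univ (fun j => |D j|) fun j _ => hr_pos s hs j
    simpa only [hr_sum, div_one, sq_abs] using this
  have h0 : ∑ j, r 0 j * log (r 0 j / p j) = 0 :=
    sum_eq_zero fun j _ => by simp [r, div_self (hp.1 j).ne']
  have h'0 : ∑ j, D j * (log (r 0 j / p j) + 1) = 0 := by
    simp [r, D, div_self (hp.1 _).ne', sum_sub_distrib, hp.2, hq.2]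
  have h1 : ∑ j, r 1 j * log (r 1 j / p j) = KL q p := by simp [r, D, KL]
  linarith [add_add_half_le_of_le_deriv2 hh hh' hc]

theorem sum_sq_sub_le_KL (hq : q ∈ simplex n) (hp : p ∈ simplex n) :
    ∑ j, (q j - p j) ^ 2 ≤ KL q p := by
  have hD : ∑ j, (q j - p j) = 0 := by rw [sum_sub_distrib, hq.2, hp.2, sub_self]
  linarith [two_mul_sum_sq_le_sq_sum_abs hD, sq_sum_abs_sub_le_two_mul_KL hq hp]

theorem KL_nonneg (hq : q ∈ simplex n) (hp : p ∈ simplex n) : 0 ≤ KL q p :=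
  (sum_nonneg fun _ _ => sq_nonneg _).trans (sum_sq_sub_le_KL hq hp)

theorem KL_pos (hq : q ∈ simplex n) (hp : p ∈ simplex n) (hne : q ≠ p) : 0 < KL q p := by
  obtain ⟨j, hj⟩ := Function.ne_iff.1 hne
  refine lt_of_lt_of_le (sum_pos' (fun _ _ => sq_nonneg _) ⟨j, mem_univ j, ?_⟩)
    (sum_sq_sub_le_KL hq hp)
  exact pow_two_pos_of_ne_zero (sub_ne_zero.2 hj)

end KullbackLeibler

section DualLoss

variable {n : ℕ} {p : Fin (n+1) → ℝ} {x : E n}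

@[simp] theorem mixDist_castSucc (x : E n) (i : Fin n) : mixDist x i.castSucc = x i := by
  simp [mixDist]

@[simp] theorem mixDist_last (x : E n) : mixDist x (Fin.last n) = 1 - ∑ i, x i := by
  simp [mixDist]

@[simp] theorem sum_mixDist (x : E n) : ∑ j, mixDist x j = 1 := by
  simp [Fin.sum_univ_castSucc]

theorem mixDist_mem_simplex (hx : x ∈ Δset n) : mixDist x ∈ simplex n := by
  refine ⟨fun j => Fin.lastCases ?_ (fun i => ?_) j, sum_mixDist x⟩
  · rw [mixDist_last]; linarith [hx.2]
  · rw [mixDist_castSucc]; exact hx.1 i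

theorem mixDist_etaCoord {q : Fin (n+1) → ℝ} (hq : q ∈ simplex n) :
    mixDist (etaCoord q) = q := by
  funext j
  refine Fin.lastCases ?_ (fun i => ?_) j
  · have := hq.2
    rw [Fin.sum_univ_castSucc] at this
    simp only [mixDist_last, etaCoord]
    linarith
  · simp [etaCoord]

theorem continuous_mixDist_apply (j : Fin (n+1)) : Continuous fun x : E n => mixDist x j := by
  refine Fin.lastCases ?_ (fun i => ?_) j
  · simp only [mixDist_last]; fun_prop
  · simp only [mixDist_castSucc]; fun_prop

def gradLstar (p : Fin (n+1) → ℝ) (x : E n) : E n :=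
  WithLp.toLp 2 fun i =>
    log (mixDist x i.castSucc / p i.castSucc) - log (mixDist x (Fin.last n) / p (Fin.last n))

theorem Lstar_eq_sum (p : Fin (n+1) → ℝ) (x : E n) :
    Lstar p x = ∑ i, x i * log (x i / p i.castSucc)
      + (1 - ∑ i, x i) * log ((1 - ∑ i, x i) / p (Fin.last n)) := by
  simp [Lstar, KL, Fin.sum_univ_castSucc]

theorem hasGradientAt_Lstar (hp : ∀ j, p j ≠ 0) (hx : x ∈ Δset n) :
    HasGradientAt (Lstar p) (gradLstar p x) x := by
  have hlast : 1 - ∑ i, x i ≠ 0 := by linarith [hx.2]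
  have hcoord := PiLp.hasFDerivAt_apply (𝕜 := ℝ) 2 x
  have hsum := (HasFDerivAt.fun_sum (u := univ) fun i _ => hcoord i).const_sub 1
  have h1 := HasFDerivAt.fun_sum (u := univ) fun i _ =>
    (hasDerivAt_mul_log_div (hx.1 i).ne' (hp i.castSucc)).comp_hasFDerivAt x (hcoord i)
  have h2 := (hasDerivAt_mul_log_div hlast (hp (Fin.last n))).comp_hasFDerivAt x hsum
  rw [show Lstar p = _ from funext (Lstar_eq_sum p), hasGradientAt_iff_hasFDerivAt]
  refine (h1.fun_add h2).congr_fderiv (ContinuousLinearMap.ext fun v => ?_)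
  simp only [smul_neg, add_apply, _root_.sum_apply, smul_apply, PiLp.proj_apply, smul_eq_mul,
    neg_apply, gradLstar, mixDist_castSucc, mixDist_last, InnerProductSpace.toDual_apply_apply,
    PiLp.inner_apply, RCLike.inner_apply, conj_trivial]
  rw [mul_sum, ← sum_neg_distrib, ← sum_add_distrib]
  exact sum_congr rfl fun i _ => by ring

theorem inner_sub_etaCoord_gradLstar (hp : p ∈ simplex n) (x : E n) :
    inner ℝ (x - etaCoord p) (gradLstar p x) = KL (mixDist x) p + KL p (mixDist x) := by
  have hplast : p (Fin.last n) = 1 - ∑ i : Fin n, p i.castSucc := by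
    have := hp.2; rw [Fin.sum_univ_castSucc] at this; linarith
  rw [KL_add_KL, Fin.sum_univ_castSucc]
  simp only [etaCoord, gradLstar, mixDist_castSucc, mixDist_last, PiLp.inner_apply,
    PiLp.sub_apply, RCLike.inner_apply, conj_trivial]
  set b := log ((1 - ∑ i, x i) / p (Fin.last n))
  rw [hplast]
  simp only [sub_mul, mul_sub, sum_sub_distrib, ← mul_sum, mul_comm (log _)]
  ring

theorem Lstar_nonneg (hp : p ∈ simplex n) (hx : x ∈ Δset n) : 0 ≤ Lstar p x :=
  KL_nonneg (mixDist_mem_simplex hx) hp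

theorem norm_sub_etaCoord_sq_le (x : E n) (q : Fin (n+1) → ℝ) :
    ‖x - etaCoord q‖ ^ 2 ≤ ∑ j, (mixDist x j - q j) ^ 2 := by
  rw [EuclideanSpace.real_norm_sq_eq, Fin.sum_univ_castSucc]
  simp only [PiLp.sub_apply, etaCoord, mixDist_castSucc]
  exact le_add_of_nonneg_right (sq_nonneg _)

/-- Polyak–Łojasiewicz inequality for the dual loss. -/
theorem four_mul_Lstar_le_norm_gradLstar_sq (hp : p ∈ simplex n) (hx : x ∈ Δset n) :
    4 * Lstar p x ≤ ‖gradLstar p x‖ ^ 2 := by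
  set a := ‖x - etaCoord p‖
  set g := ‖gradLstar p x‖
  have hsq : a ^ 2 ≤ KL p (mixDist x) :=
    calc a ^ 2 ≤ ∑ j, (mixDist x j - p j) ^ 2 := norm_sub_etaCoord_sq_le x p
      _ = ∑ j, (p j - mixDist x j) ^ 2 := sum_congr rfl fun j _ => by ring
      _ ≤ KL p (mixDist x) := sum_sq_sub_le_KL hp (mixDist_mem_simplex hx)
  have key : Lstar p x + a ^ 2 ≤ a * g :=
    calc Lstar p x + a ^ 2 ≤ KL (mixDist x) p + KL p (mixDist x) := add_le_add_right hsq _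
      _ = inner ℝ (x - etaCoord p) (gradLstar p x) := (inner_sub_etaCoord_gradLstar hp x).symm
      _ ≤ a * g := real_inner_le_norm _ _
  nlinarith [sq_nonneg (g - 2 * a)]

theorem norm_gradLstar_sq_le (hp : p ∈ simplex n) {ε : ℝ} (hε : 0 < ε)
    (hxε : ∀ j, ε ≤ mixDist x j) (hpε : ∀ j, ε ≤ p j) :
    ‖gradLstar p x‖ ^ 2 ≤ 2 * (n + 1) / ε ^ 2 * Lstar p x := by
  have hq : mixDist x ∈ simplex n := ⟨fun j => hε.trans_le (hxε j), sum_mixDist x⟩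
  set r : Fin (n+1) → ℝ := fun j => log (mixDist x j / p j)
  have hr : ∀ j, r j ^ 2 ≤ (mixDist x j - p j) ^ 2 / ε ^ 2 := fun j =>
    calc r j ^ 2 = |r j| ^ 2 := (sq_abs _).symm
      _ ≤ (|mixDist x j - p j| / ε) ^ 2 :=
        pow_le_pow_left₀ (abs_nonneg _) (abs_log_div_le hε (hxε j) (hpε j)) 2
      _ = (mixDist x j - p j) ^ 2 / ε ^ 2 := by rw [div_pow, sq_abs]
  have hsplit : ‖gradLstar p x‖ ^ 2 ≤ 2 * (n + 1) * ∑ j, r j ^ 2 := by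
    rw [EuclideanSpace.real_norm_sq_eq, Fin.sum_univ_castSucc]
    calc ∑ i, gradLstar p x i ^ 2
        ≤ ∑ i : Fin n, (2 * r i.castSucc ^ 2 + 2 * r (Fin.last n) ^ 2) :=
          sum_le_sum fun i _ => by
            simp only [gradLstar]
            nlinarith [sq_nonneg (r i.castSucc + r (Fin.last n))]
      _ = 2 * ∑ i : Fin n, r i.castSucc ^ 2 + 2 * n * r (Fin.last n) ^ 2 := by
          rw [sum_add_distrib, ← mul_sum, sum_const, card_univ, Fintype.card_fin, nsmul_eq_mul]
          ring
      _ ≤ 2 * (n + 1) * (∑ i : Fin n, r i.castSucc ^ 2 + r (Fin.last n) ^ 2) := by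
          nlinarith [sum_nonneg (s := univ) fun (i : Fin n) _ => sq_nonneg (r i.castSucc),
            sq_nonneg (r (Fin.last n)), (n.cast_nonneg : (0 : ℝ) ≤ n)]
  calc ‖gradLstar p x‖ ^ 2 ≤ 2 * (n + 1) * ∑ j, r j ^ 2 := hsplit
    _ ≤ 2 * (n + 1) * ∑ j, (mixDist x j - p j) ^ 2 / ε ^ 2 := by gcongr with j; exact hr j
    _ = 2 * (n + 1) / ε ^ 2 * ∑ j, (mixDist x j - p j) ^ 2 := by rw [← sum_div]; ring
    _ ≤ 2 * (n + 1) / ε ^ 2 * Lstar p x := by gcongr; exact sum_sq_sub_le_KL hq hp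

end DualLoss

theorem HasGradientAt.hasDerivAt_comp_of_hasDerivAt_neg {F : Type*} [NormedAddCommGroup F]
    [InnerProductSpace ℝ F] [CompleteSpace F] {f : F → ℝ} {g : F} {γ : ℝ → F} {t : ℝ}
    (hf : HasGradientAt f g (γ t)) (hγ : HasDerivAt γ (-g) t) :
    HasDerivAt (fun s => f (γ s)) (-‖g‖ ^ 2) t := by
  refine (hf.hasFDerivAt.comp_hasDerivAt t hγ).congr_deriv ?_
  simp [inner_neg_right]

section Flow

variable {n : ℕ} {p : Fin (n+1) → ℝ} {η : ℝ → E n}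

theorem tendsto_mixDist_of_tendsto_Lstar (hp : p ∈ simplex n)
    (hmem : ∀ t ≥ (0 : ℝ), η t ∈ Δset n)
    (hlim : Tendsto (fun t => Lstar p (η t)) atTop (𝓝 0)) (j : Fin (n+1)) :
    Tendsto (fun t => mixDist (η t) j) atTop (𝓝 (p j)) := by
  rw [tendsto_iff_norm_sub_tendsto_zero]
  refine squeeze_zero' (Eventually.of_forall fun t => norm_nonneg _) ?_ (by simpa using hlim.sqrt)
  filter_upwards [eventually_ge_atTop 0] with t ht
  exact abs_le_sqrt <|
    (single_le_sum (fun j _ => sq_nonneg (mixDist (η t) j - p j)) (mem_univ j)).trans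
      (sum_sq_sub_le_KL (mixDist_mem_simplex (hmem t ht)) hp)

theorem exists_pos_le_mixDist_of_tendsto_Lstar (hp : p ∈ simplex n)
    (hη : ContinuousOn η (Ici 0)) (hmem : ∀ t ≥ (0 : ℝ), η t ∈ Δset n)
    (hlim : Tendsto (fun t => Lstar p (η t)) atTop (𝓝 0)) :
    ∃ ε > 0, (∀ j, ε ≤ p j) ∧ ∀ t ≥ (0 : ℝ), ∀ j, ε ≤ mixDist (η t) j := by
  have hcoord := tendsto_mixDist_of_tendsto_Lstar hp hmem hlim
  obtain ⟨ε, hε, hle⟩ := exists_pos_forall_le_of_tendsto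
    (ContinuousOn.finset_inf'_apply univ_nonempty fun j _ =>
      (continuous_mixDist_apply j).comp_continuousOn hη)
    (fun t ht => (lt_inf'_iff _).2 fun j _ => (mixDist_mem_simplex (hmem t ht)).1 j)
    (Tendsto.finset_inf'_nhds_apply univ_nonempty fun j _ => hcoord j)
    ((lt_inf'_iff _).2 fun j _ => hp.1 j)
  have hη_le : ∀ t ≥ (0 : ℝ), ∀ j, ε ≤ mixDist (η t) j := fun t ht j =>
    (hle t ht).trans (inf'_le _ (mem_univ j))
  refine ⟨ε, hε, fun j => ge_of_tendsto (hcoord j) ?_, hη_le⟩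
  filter_upwards [eventually_ge_atTop 0] with t ht using hη_le t ht j

end Flow

/-- Convergence of the `η`-gradient flow for the dual loss: rate higher than 2. -/
theorem stmt_18 {n : ℕ} (p q₀ : Fin (n+1) → ℝ)
    (hp : p ∈ simplex n) (hq₀ : q₀ ∈ simplex n) (hne : q₀ ≠ p)
    (η : ℝ → E n) (hmem : ∀ t ≥ (0 : ℝ), η t ∈ Δset n)
    (hη0 : η 0 = etaCoord q₀)
    (hode : ∀ t ≥ (0 : ℝ), HasDerivAt η (-(gradient (Lstar p) (η t))) t) :
    ∃ m L c : ℝ, 1 < m ∧ m ≤ L ∧ 0 < c ∧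
      ∀ t ≥ (0 : ℝ),
        c * Real.exp (-2 * L * t) ≤ Lstar p (η t) ∧
        Lstar p (η t) ≤ c * Real.exp (-2 * m * t) ∧
        c * Real.exp (-2 * m * t) ≤ c * Real.exp (-2 * t) := by
  have hgrad : ∀ t ≥ (0 : ℝ), HasGradientAt (Lstar p) (gradLstar p (η t)) (η t) :=
    fun t ht => hasGradientAt_Lstar (fun j => (hp.1 j).ne') (hmem t ht)
  have hflow : ∀ t ≥ (0 : ℝ),
      HasDerivAt (fun s => Lstar p (η s)) (-‖gradLstar p (η t)‖ ^ 2) t := fun t ht =>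
    (hgrad t ht).hasDerivAt_comp_of_hasDerivAt_neg ((hgrad t ht).gradient ▸ hode t ht)
  have hc : 0 < Lstar p (η 0) := by
    rw [hη0, Lstar, mixDist_etaCoord hq₀]
    exact KL_pos hq₀ hp hne
  have hupper : ∀ t ≥ (0 : ℝ), Lstar p (η t) ≤ Lstar p (η 0) * exp (-(4 * t)) :=
    le_mul_exp_neg_of_hasDerivAt hflow fun t ht => by
      linarith [four_mul_Lstar_le_norm_gradLstar_sq hp (hmem t ht)]
  obtain ⟨ε, hε, hpε, hηε⟩ := exists_pos_le_mixDist_of_tendsto_Lstar hp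
    (fun t ht => (hode t ht).continuousAt.continuousWithinAt) hmem
    (tendsto_nhds_zero_of_le_mul_exp_neg four_pos (fun t ht => Lstar_nonneg hp (hmem t ht)) hupper)
  set L := max 2 ((n + 1) / ε ^ 2)
  have hlower : ∀ t ≥ (0 : ℝ), Lstar p (η 0) * exp (-(2 * L * t)) ≤ Lstar p (η t) :=
    mul_exp_neg_le_of_hasDerivAt hflow fun t ht => by
      have hK : 2 * (n + 1) / ε ^ 2 ≤ 2 * L := by
        rw [mul_div_assoc]; exact mul_le_mul_of_nonneg_left (le_max_right _ _) zero_le_two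
      linarith [norm_gradLstar_sq_le hp hε (hηε t ht) hpε,
        mul_le_mul_of_nonneg_right hK (Lstar_nonneg hp (hmem t ht))]
  refine ⟨2, L, Lstar p (η 0), one_lt_two, le_max_left _ _, hc, fun t ht => ⟨?_, ?_, ?_⟩⟩
  · simpa [neg_mul] using hlower t ht
  · convert hupper t ht using 3; ring
  · gcongr; linarith

end
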